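/- For all n ∈ ℕ, the abelian complexity of y satisfies: P¹_y(n) = 2·Δ₁₂(n) + 2 if n is odd; P¹_y(n) = (5/2)·Δ₁₂(n) + 5/2 if n is even and Δ₁₂(n) is odd; P¹_y(n) = (5/2)·Δ₁₂(n) + 4 if n and Δ₁₂(n) are even and m₁₂(n) is odd; P¹_y(n) = (5/2)·Δ₁₂(n) + 1 if n, Δ₁₂(n) and m₁₂(n) are all even. -/

import Mathlib

/-- The 2-kernel of a sequence `s : ℕ → ℤ`. -/
def kernel2 (s : ℕ → ℤ) : Set (ℕ → ℤ) :=
  {t | ∃ i j : ℕ, j < 2 ^ i ∧ t = fun n => s (2 ^ i * n + j)}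

/-- A sequence is 2-regular if the ℤ-module spanned by its 2-kernel is finitely generated. -/
def IsTwoRegular (s : ℕ → ℤ) : Prop :=
  (Submodule.span ℤ (kernel2 s)).FG

/-- A sequence is 2-automatic if its 2-kernel is finite. -/
def IsTwoAutomatic (s : ℕ → ℤ) : Prop :=
  (kernel2 s).Finite

/-- The period-doubling word, fixed point (starting with 0) of 0 ↦ 01, 1 ↦ 00:
its `n`-th letter is the parity of the 2-adic valuation of `n+1`. -/
def pd (n : ℕ) : ℕ := (n + 1).factorization 2 % 2

/-- The Thue–Morse word, fixed point (starting with 0) of 0 ↦ 01, 1 ↦ 10: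
its `n`-th letter is the parity of the binary digit sum of `n`. -/
def tm (n : ℕ) : ℕ := (Nat.digits 2 n).sum % 2

/-- The 2-block coding `x = block(p, 2)` of the period-doubling word. -/
def xw (n : ℕ) : ℕ := 2 * pd n + pd (n + 1)

/-- The 2-block coding `y = block(t, 2)` of the Thue–Morse word. -/
def yw (n : ℕ) : ℕ := 2 * tm n + tm (n + 1)

/-- The factor of an infinite word `w` of length `len` occurring at position `i`. -/
def factorAt (w : ℕ → ℕ) (i len : ℕ) : List ℕ :=
  (List.range len).map fun k => w (i + k)

/-- `u` is a factor of the infinite word `w`. -/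
def IsFactor (w : ℕ → ℕ) (u : List ℕ) : Prop :=
  ∃ i, u = factorAt w i u.length

/-- Maximal number of 0's in a factor of `x` of length `n`. -/
noncomputable def M0 (n : ℕ) : ℕ := sSup {k | ∃ i, (factorAt xw i n).count 0 = k}

/-- Minimal number of 0's in a factor of `x` of length `n`. -/
noncomputable def m0 (n : ℕ) : ℕ := sInf {k | ∃ i, (factorAt xw i n).count 0 = k}

noncomputable def D0 (n : ℕ) : ℕ := M0 n - m0 n

/-- Maximal number of 2's in a factor of `x` of length `n`. -/
noncomputable def M2c (n : ℕ) : ℕ := sSup {k | ∃ i, (factorAt xw i n).count 2 = k}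

/-- Minimal number of 2's in a factor of `x` of length `n`. -/
noncomputable def m2c (n : ℕ) : ℕ := sInf {k | ∃ i, (factorAt xw i n).count 2 = k}

/-- The max-jump function for `M0`. -/
noncomputable def JM0 : ℕ → ℕ
  | 0 => 0
  | n + 1 => if M0 n < M0 (n + 1) then 1 else 0

/-- The min-jump function for `m0`. -/
noncomputable def jm0 (n : ℕ) : ℕ := if m0 n < m0 (n + 1) then 1 else 0

/-- Maximal total number of 1's and 2's in a factor of `y` of length `n`. -/
noncomputable def M12 (n : ℕ) : ℕ :=
  sSup {k | ∃ i, (factorAt yw i n).count 1 + (factorAt yw i n).count 2 = k}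

/-- Minimal total number of 1's and 2's in a factor of `y` of length `n`. -/
noncomputable def m12 (n : ℕ) : ℕ :=
  sInf {k | ∃ i, (factorAt yw i n).count 1 + (factorAt yw i n).count 2 = k}

noncomputable def D12 (n : ℕ) : ℕ := M12 n - m12 n

/-- Maximal total number of 0's and 3's in a factor of `y` of length `n`. -/
noncomputable def M03 (n : ℕ) : ℕ :=
  sSup {k | ∃ i, (factorAt yw i n).count 0 + (factorAt yw i n).count 3 = k}

/-- Minimal total number of 0's and 3's in a factor of `y` of length `n`. -/
noncomputable def m03 (n : ℕ) : ℕ :=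
  sInf {k | ∃ i, (factorAt yw i n).count 0 + (factorAt yw i n).count 3 = k}

/-- The max-jump function for `M03`. -/
noncomputable def JM03 (n : ℕ) : ℕ := if M03 (n - 1) < M03 n then 1 else 0

/-- The min-jump function for `m03`. -/
noncomputable def jm03 (n : ℕ) : ℕ := if m03 n < m03 (n + 1) then 1 else 0

/-- Abelian complexity: the number of abelian equivalence classes (i.e. distinct
multisets of letters) of factors of `w` of length `n`. -/
noncomputable def abComplexity (w : ℕ → ℕ) (n : ℕ) : ℕ :=
  Set.ncard {m : Multiset ℕ | ∃ i, (↑(factorAt w i n) : Multiset ℕ) = m}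

/-- The number of occurrences of `v` as a factor of `u`. -/
def countFactor (u v : List ℕ) : ℕ :=
  ((List.range (u.length + 1 - v.length)).filter
    fun i => decide ((u.drop i).take v.length = v)).length

/-- 2-abelian complexity: the number of 2-abelian equivalence classes of factors of `w`
of length `n`, where two words are 2-abelian equivalent when every word of length at most 2
occurs equally often in both. -/
noncomputable def abel2Complexity (w : ℕ → ℕ) (n : ℕ) : ℕ :=
  Set.ncard {f : List ℕ → ℕ |
    ∃ i, f = fun v => if v.length ≤ 2 then countFactor (factorAt w i n) v else 0}

/-- The morphism φ : 0 ↦ 12, 1 ↦ 12, 2 ↦ 00. -/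
def phiL : ℕ → List ℕ
  | 0 => [1, 2]
  | 1 => [1, 2]
  | 2 => [0, 0]
  | _ => []

/-- The morphism τ : 0 ↦ 0, 1 ↦ 2, 2 ↦ 1. -/
def tauL : ℕ → ℕ
  | 1 => 2
  | 2 => 1
  | n => n

/-!
The letters 1 and 2 of `y` mark the positions where `t` changes, and the prefix sums of `t` are
balanced up to a correction depending only on the parity of the position and the last letter. So
the Parikh vector of the factor of length `n` at `i` is determined by the state
`(excess (i + n) - excess i, i mod 2, t i, t (i + n))`. As `t (2i) = t i` and
`t (2i + 1) = 1 - t i`, the states of windows of lengths `2k` and `2k + 1` are affine images of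
those of lengths `k` and `k + 1`; by induction the attainable excess differences are exactly the
values in `[emin n, emax n]` congruent to `n` modulo 3, and each contributes 2 abelian classes when
`n` is odd, and alternately 1 or 4 when `n` is even. Since `3 M₁₂(n) = 2n + emax n` and
`3 m₁₂(n) = 2n + emin n`, summing gives the formula.
-/

lemma tm_le_one (n : ℕ) : tm n ≤ 1 := Nat.le_of_lt_succ (Nat.mod_lt _ two_pos)

lemma tm_two_mul (k : ℕ) : tm (2 * k) = tm k := by
  rcases Nat.eq_zero_or_pos k with rfl | hk
  · rfl
  · rw [tm, Nat.digits_def' one_lt_two (by omega)]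
    simp [tm]

lemma tm_two_mul_add_one (k : ℕ) : tm (2 * k + 1) = 1 - tm k := by
  rw [tm, Nat.digits_def' one_lt_two (by omega), show (2 * k + 1) % 2 = 1 by omega,
    show (2 * k + 1) / 2 = k by omega, List.sum_cons]
  have := tm_le_one k
  unfold tm at this ⊢
  omega

lemma tm_two_mul_add {r : ℕ} (k : ℕ) (hr : r ≤ 1) :
    tm (2 * k + r) = if r = 1 then 1 - tm k else tm k := by
  interval_cases r
  · simp [tm_two_mul]
  · simp [tm_two_mul_add_one]

/-- The factor `u` of `y` of length `n` at `i` has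
`3 (|u|₁ + |u|₂) = 2n + excess (i + n) - excess i`. -/
def excess (K : ℕ) : ℤ := ∑ k ∈ Finset.range K, if tm (k + 1) = tm k then -2 else 1

lemma excess_succ (K : ℕ) :
    excess (K + 1) = excess K + if tm (K + 1) = tm K then -2 else 1 :=
  Finset.sum_range_succ _ _

lemma excess_two_mul (K : ℕ) : excess (2 * K) = -excess K := by
  induction K with
  | zero => rfl
  | succ K ih =>
    rw [show 2 * (K + 1) = 2 * K + 1 + 1 by ring, excess_succ, excess_succ, ih, excess_succ,
      show 2 * K + 1 + 1 = 2 * (K + 1) by ring, tm_two_mul, tm_two_mul_add_one, tm_two_mul]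
    have := tm_le_one K
    have := tm_le_one (K + 1)
    split_ifs <;> omega

lemma excess_two_mul_add {r : ℕ} (K : ℕ) (hr : r ≤ 1) : excess (2 * K + r) = r - excess K := by
  interval_cases r
  · simp [excess_two_mul]
  · rw [excess_succ, excess_two_mul, tm_two_mul_add_one, tm_two_mul]
    have := tm_le_one K
    split_ifs <;> omega

/-- `2 · #{k < K | t k = 1} = K + parityDefect (K % 2) (t K)`. -/
def parityDefect (q t : ℕ) : ℤ := if q = 1 then 1 - 2 * t else 0

lemma two_mul_tm_eq (k : ℕ) :
    2 * (tm k : ℤ) =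
      1 + (parityDefect ((k + 1) % 2) (tm (k + 1)) - parityDefect (k % 2) (tm k)) := by
  obtain ⟨j, r, hr, rfl⟩ : ∃ j r, r ≤ 1 ∧ k = 2 * j + r := ⟨k / 2, k % 2, by omega, by omega⟩
  have := tm_le_one j
  interval_cases r
  · rw [show 2 * j + 0 + 1 = 2 * j + 1 by ring, tm_two_mul_add_one, Nat.add_zero, tm_two_mul]
    simp only [parityDefect, Nat.mul_add_mod_self_left, Nat.mod_succ, Nat.mul_mod_right, if_true,
      zero_ne_one, if_false, sub_zero]
    omega
  · rw [show 2 * j + 1 + 1 = 2 * (j + 1) by ring, tm_two_mul_add_one]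
    simp [parityDefect, Nat.mul_add_mod_self_left]

lemma count_factorAt (w : ℕ → ℕ) (i n a : ℕ) :
    ((factorAt w i n).count a : ℤ) = ∑ k ∈ Finset.range n, if w (i + k) = a then 1 else 0 := by
  induction n with
  | zero => simp [factorAt]
  | succ n ih =>
    rw [Finset.sum_range_succ, ← ih]
    simp [factorAt, List.range_succ, List.count_singleton]

lemma sum_range_telescope (f g : ℕ → ℤ) (c : ℤ) (h : ∀ k, f k = c + (g (k + 1) - g k))
    (i n : ℕ) : ∑ k ∈ Finset.range n, f (i + k) = n * c + (g (i + n) - g i) := by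
  simp only [h, Finset.sum_add_distrib, Finset.sum_const, Finset.card_range, nsmul_eq_mul]
  have := Finset.sum_range_sub (fun k => g (i + k)) n
  simp only [← add_assoc, add_zero] at this
  rw [this]

lemma yw_le_three (k : ℕ) : yw k ≤ 3 := by
  have := tm_le_one k
  have := tm_le_one (k + 1)
  unfold yw
  omega

lemma yw_ones_twos_telescope (k : ℕ) :
    3 * ((if yw k = 1 then 1 else 0) + (if yw k = 2 then 1 else 0) : ℤ)
      = 2 + (excess (k + 1) - excess k) := by
  have := tm_le_one k
  have := tm_le_one (k + 1)
  rw [excess_succ]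
  unfold yw
  split_ifs <;> omega

lemma yw_twos_sub_ones (k : ℕ) :
    ((if yw k = 2 then 1 else 0) - (if yw k = 1 then 1 else 0) : ℤ) = tm k - tm (k + 1) := by
  have := tm_le_one k
  have := tm_le_one (k + 1)
  unfold yw
  split_ifs <;> omega

lemma yw_twos_threes_telescope (k : ℕ) :
    2 * ((if yw k = 2 then 1 else 0) + (if yw k = 3 then 1 else 0) : ℤ)
      = 1 + (parityDefect ((k + 1) % 2) (tm (k + 1)) - parityDefect (k % 2) (tm k)) := by
  rw [← two_mul_tm_eq]
  have := tm_le_one k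
  have := tm_le_one (k + 1)
  unfold yw
  split_ifs <;> omega

def letterCoords (n : ℕ) (m : Multiset ℕ) : ℤ × ℤ × ℤ :=
  (3 * (m.count 1 + m.count 2 : ℤ) - 2 * n, (m.count 2 : ℤ) - m.count 1,
    2 * (m.count 2 + m.count 3 : ℤ) - n)

lemma card_eq_count_add_count_add_count_add_count {m : Multiset ℕ} (hm : ∀ a ∈ m, a ≤ 3) :
    Multiset.card m = m.count 0 + m.count 1 + m.count 2 + m.count 3 := by
  have hsub : m.toFinset ⊆ Finset.range 4 := fun a ha =>
    Finset.mem_range.mpr (Nat.lt_succ_of_le (hm a (Multiset.mem_toFinset.mp ha)))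
  rw [← Multiset.toFinset_sum_count_eq, Finset.sum_subset hsub fun a _ ha => by simpa using ha]
  simp [Finset.sum_range_succ]

lemma letterCoords_injOn (n : ℕ) :
    Set.InjOn (letterCoords n) {m | Multiset.card m = n ∧ ∀ a ∈ m, a ≤ 3} := by
  rintro m₁ ⟨hc₁, hl₁⟩ m₂ ⟨hc₂, hl₂⟩ h
  simp only [letterCoords, Prod.mk.injEq] at h
  have hcard₁ := card_eq_count_add_count_add_count_add_count hl₁
  have hcard₂ := card_eq_count_add_count_add_count_add_count hl₂
  ext a
  by_cases ha : a ≤ 3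
  · interval_cases a <;> omega
  · rw [Multiset.count_eq_zero.mpr fun h => ha (hl₁ a h),
      Multiset.count_eq_zero.mpr fun h => ha (hl₂ a h)]

structure WindowState where
  d : ℤ
  par : ℕ
  a : ℕ
  b : ℕ
deriving DecidableEq

def windowState (i n : ℕ) : WindowState := ⟨excess (i + n) - excess i, i % 2, tm i, tm (i + n)⟩

def signature (q p a b : ℕ) : ℤ × ℤ :=
  ((a : ℤ) - b, parityDefect ((p + q) % 2) b - parityDefect p a)

def stateCoords (n : ℕ) (x : WindowState) : ℤ × ℤ × ℤ := (x.d, signature (n % 2) x.par x.a x.b)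

lemma letterCoords_factorAt (i n : ℕ) :
    letterCoords n (factorAt yw i n) = stateCoords n (windowState i n) := by
  simp only [letterCoords, stateCoords, windowState, signature, Multiset.coe_count,
    count_factorAt]
  have h12 := sum_range_telescope _ _ _ yw_ones_twos_telescope i n
  have h21 := sum_range_telescope (fun k => (if yw k = 2 then 1 else 0) - if yw k = 1 then 1 else 0)
    (fun k => -(tm k : ℤ)) 0 (fun k => by rw [yw_twos_sub_ones]; ring) i n
  have h23 := sum_range_telescope _ (fun k => parityDefect (k % 2) (tm k)) _
    yw_twos_threes_telescope i n
  rw [← Finset.mul_sum, Finset.sum_add_distrib] at h12 h23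
  rw [Finset.sum_sub_distrib] at h21
  rw [← Nat.add_mod]
  refine Prod.ext ?_ (Prod.ext ?_ ?_) <;> dsimp only <;> linarith

lemma abComplexity_yw_eq (n : ℕ) :
    abComplexity yw n = (Set.range fun i => stateCoords n (windowState i n)).ncard := by
  have hsub : Set.range (fun i => (factorAt yw i n : Multiset ℕ))
      ⊆ {m | Multiset.card m = n ∧ ∀ a ∈ m, a ≤ 3} := by
    rintro _ ⟨i, rfl⟩
    refine ⟨by simp [factorAt], fun a ha => ?_⟩
    obtain ⟨k, -, rfl⟩ := List.mem_map.mp ha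
    exact yw_le_three _
  change (Set.range _).ncard = _
  rw [← ((letterCoords_injOn n).mono hsub).ncard_image, ← Set.range_comp]
  simp only [Function.comp_def, letterCoords_factorAt]

/-- `(emin n, emax n)` are the least and greatest values of `excess (i + n) - excess i`; the
recursion mirrors `excess (2 * K + r) = r - excess K`. -/
def excessBounds : ℕ → ℤ × ℤ
  | 0 => (0, 0)
  | 1 => (-2, 1)
  | n + 2 =>
    if (n + 2) % 2 = 0 then (-(excessBounds ((n + 2) / 2)).2, -(excessBounds ((n + 2) / 2)).1)
    else (min (1 - (excessBounds ((n + 1) / 2)).2) (-1 - (excessBounds ((n + 3) / 2)).2),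
      max (1 - (excessBounds ((n + 1) / 2)).1) (-1 - (excessBounds ((n + 3) / 2)).1))
  decreasing_by all_goals omega

def emin (n : ℕ) : ℤ := (excessBounds n).1

def emax (n : ℕ) : ℤ := (excessBounds n).2

lemma emin_zero : emin 0 = 0 := by simp [emin, excessBounds]

lemma emax_zero : emax 0 = 0 := by simp [emax, excessBounds]

lemma emin_one : emin 1 = -2 := by simp [emin, excessBounds]

lemma emax_one : emax 1 = 1 := by simp [emax, excessBounds]

lemma excessBounds_two_mul (k : ℕ) :
    excessBounds (2 * k) = (-emax k, -emin k) := by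
  rcases k with _ | k
  · simp [emin, emax, excessBounds]
  · rw [show 2 * (k + 1) = 2 * k + 2 by ring, excessBounds]
    simp [emin, emax, show (2 * k + 2) / 2 = k + 1 by omega]

lemma excessBounds_two_mul_add_one (k : ℕ) :
    excessBounds (2 * k + 1) =
      (min (1 - emax k) (-1 - emax (k + 1)), max (1 - emin k) (-1 - emin (k + 1))) := by
  rcases k with _ | k
  · simp [emin, emax, excessBounds]
  · rw [show 2 * (k + 1) + 1 = 2 * k + 1 + 2 by ring, excessBounds]
    simp [emin, emax, show (2 * k + 1 + 1) / 2 = k + 1 by omega,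
      show (2 * k + 1 + 3) / 2 = k + 1 + 1 by omega]

lemma emin_two_mul (k : ℕ) : emin (2 * k) = -emax k := by
  rw [emin, excessBounds_two_mul]

lemma emax_two_mul (k : ℕ) : emax (2 * k) = -emin k := by
  rw [emax, excessBounds_two_mul]

lemma emin_two_mul_add_one (k : ℕ) :
    emin (2 * k + 1) = min (1 - emax k) (-1 - emax (k + 1)) := by
  rw [emin, excessBounds_two_mul_add_one]

lemma emax_two_mul_add_one (k : ℕ) :
    emax (2 * k + 1) = max (1 - emin k) (-1 - emin (k + 1)) := by
  rw [emax, excessBounds_two_mul_add_one]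

lemma emin_le_emax (n : ℕ) : emin n ≤ emax n := by
  induction n using Nat.strong_induction_on with
  | _ n ih =>
    obtain ⟨k, rfl | rfl⟩ := Nat.even_or_odd' n
    · rcases k.eq_zero_or_pos with rfl | hk
      · simp [emin_zero, emax_zero]
      · rw [emin_two_mul, emax_two_mul]
        linarith [ih k (by omega)]
    · rw [emin_two_mul_add_one, emax_two_mul_add_one]
      have := ih k (by omega)
      exact (min_le_left _ _).trans (by linarith [le_max_left (1 - emin k) (-1 - emin (k + 1))])

lemma three_dvd_emin_sub_and_emax_sub (n : ℕ) :
    (3 : ℤ) ∣ emin n - n ∧ (3 : ℤ) ∣ emax n - n := by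
  induction n using Nat.strong_induction_on with
  | _ n ih =>
    obtain ⟨k, rfl | rfl⟩ := Nat.even_or_odd' n
    · rcases k.eq_zero_or_pos with rfl | hk
      · simp [emin_zero, emax_zero]
      · rw [emin_two_mul, emax_two_mul]
        have := ih k (by omega)
        push_cast
        omega
    · rcases k.eq_zero_or_pos with rfl | hk
      · simp [emin_one, emax_one]
      · rw [emin_two_mul_add_one, emax_two_mul_add_one, min_def, max_def]
        have := ih k (by omega)
        have := ih (k + 1) (by omega)
        push_cast at *
        split_ifs <;> omega

lemma three_dvd_emin_sub (n : ℕ) : (3 : ℤ) ∣ emin n - n := (three_dvd_emin_sub_and_emax_sub n).1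

lemma three_dvd_emax_sub (n : ℕ) : (3 : ℤ) ∣ emax n - n := (three_dvd_emin_sub_and_emax_sub n).2

lemma emin_emax_succ_sub_mem_Icc (n : ℕ) :
    emin (n + 1) - emin n ∈ Set.Icc (-2) 1 ∧ emax (n + 1) - emax n ∈ Set.Icc (-2) 1 := by
  induction n using Nat.strong_induction_on with
  | _ n ih =>
    simp only [Set.mem_Icc] at *
    obtain ⟨k, rfl | rfl⟩ := Nat.even_or_odd' n
    · rcases k.eq_zero_or_pos with rfl | hk
      · simp [emin_zero, emax_zero, emin_one, emax_one]
      · rw [emin_two_mul_add_one, emax_two_mul_add_one, emin_two_mul, emax_two_mul, min_def,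
          max_def]
        have := ih k (by omega)
        split_ifs <;> omega
    · rw [show 2 * k + 1 + 1 = 2 * (k + 1) by ring, emin_two_mul_add_one, emax_two_mul_add_one,
        emin_two_mul, emax_two_mul, min_def, max_def]
      have := ih k (by omega)
      split_ifs <;> omega

/-- `eminPar n p` and `emaxPar n p` are the least and greatest values of
`excess (i + n) - excess i` over the `i` with `i % 2 = p`. -/
def eminPar (n p : ℕ) : ℤ :=
  if n % 2 = 0 then emin n else if p = 0 then 1 - emax (n / 2) else -1 - emax (n / 2 + 1)

def emaxPar (n p : ℕ) : ℤ :=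
  if n % 2 = 0 then emax n else if p = 0 then 1 - emin (n / 2) else -1 - emin (n / 2 + 1)

lemma eminPar_two_mul_add {p q : ℕ} (k : ℕ) (hp : p ≤ 1) (hq : q ≤ 1) :
    eminPar (2 * k + q) p = q * (1 - 2 * p) - emax (k + p * q) := by
  interval_cases p <;> interval_cases q <;>
    simp [eminPar, emin_two_mul, show (2 * k + 1) % 2 = 1 by omega,
      show (2 * k + 1) / 2 = k by omega]

lemma emaxPar_two_mul_add {p q : ℕ} (k : ℕ) (hp : p ≤ 1) (hq : q ≤ 1) :
    emaxPar (2 * k + q) p = q * (1 - 2 * p) - emin (k + p * q) := by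
  interval_cases p <;> interval_cases q <;>
    simp [emaxPar, emax_two_mul, show (2 * k + 1) % 2 = 1 by omega,
      show (2 * k + 1) / 2 = k by omega]

lemma emin_le_eminPar {p : ℕ} (n : ℕ) (hp : p ≤ 1) : emin n ≤ eminPar n p := by
  obtain ⟨k, rfl | rfl⟩ := Nat.even_or_odd' n
  · simp [eminPar]
  · rw [emin_two_mul_add_one]
    interval_cases p <;> simp [eminPar, show (2 * k + 1) % 2 = 1 by omega,
      show (2 * k + 1) / 2 = k by omega]

lemma emaxPar_le_emax {p : ℕ} (n : ℕ) (hp : p ≤ 1) : emaxPar n p ≤ emax n := by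
  obtain ⟨k, rfl | rfl⟩ := Nat.even_or_odd' n
  · simp [emaxPar]
  · rw [emax_two_mul_add_one]
    interval_cases p <;> simp [emaxPar, show (2 * k + 1) % 2 = 1 by omega,
      show (2 * k + 1) / 2 = k by omega]

/-- The bounds move by `-2` or `1` from `k` to `k + 1`, so for `n = 2k + 1` the two intervals
overlap or abut on the residue class of `n` modulo `3`. -/
lemma exists_eminPar_le_le_emaxPar {n : ℕ} {d : ℤ} (hlo : emin n ≤ d) (hhi : d ≤ emax n)
    (h3 : (3 : ℤ) ∣ d - n) : ∃ p ≤ 1, eminPar n p ≤ d ∧ d ≤ emaxPar n p := by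
  obtain ⟨k, rfl | rfl⟩ := Nat.even_or_odd' n
  · exact ⟨0, zero_le_one, by simpa [eminPar] using hlo, by simpa [emaxPar] using hhi⟩
  · rw [emin_two_mul_add_one, min_le_iff] at hlo
    rw [emax_two_mul_add_one, le_max_iff] at hhi
    have hstep := emin_emax_succ_sub_mem_Icc k
    have := three_dvd_emin_sub k
    have := three_dvd_emax_sub k
    have := three_dvd_emin_sub (k + 1)
    have := three_dvd_emax_sub (k + 1)
    have := emin_le_emax k
    have := emin_le_emax (k + 1)
    simp only [eminPar, emaxPar, show (2 * k + 1) % 2 = 1 by omega,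
      show (2 * k + 1) / 2 = k by omega, Set.mem_Icc] at hstep ⊢
    push_cast at h3
    by_cases h0 : 1 - emax k ≤ d ∧ d ≤ 1 - emin k
    · exact ⟨0, zero_le_one, by simpa using h0⟩
    · exact ⟨1, le_rfl, by simp only [one_ne_zero, if_false]; omega⟩

/-- The state of the window of length `2k + q` at `2j + p`, in terms of that of the window of
length `k + p q` at `j`. -/
def WindowState.lift (p q : ℕ) (x : WindowState) : WindowState :=
  ⟨q * (1 - 2 * p) - x.d, p, if p = 1 then 1 - x.a else x.a,
    if (p + q) % 2 = 1 then 1 - x.b else x.b⟩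

lemma windowState_two_mul_add {p q : ℕ} (j k : ℕ) (hp : p ≤ 1) (hq : q ≤ 1) :
    windowState (2 * j + p) (2 * k + q) = (windowState j (k + p * q)).lift p q := by
  have hidx : 2 * j + p + (2 * k + q) = 2 * (j + (k + p * q)) + (p + q) % 2 := by
    interval_cases p <;> interval_cases q <;> omega
  have hd : (((p + q) % 2 : ℕ) : ℤ) - p = q * (1 - 2 * p) := by
    interval_cases p <;> interval_cases q <;> rfl
  have hr : (p + q) % 2 ≤ 1 := Nat.le_of_lt_succ (Nat.mod_lt _ two_pos)
  simp only [windowState, WindowState.lift, hidx, excess_two_mul_add _ hp,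
    excess_two_mul_add _ hr, tm_two_mul_add _ hp, tm_two_mul_add _ hr, WindowState.mk.injEq,
    Nat.mul_add_mod_self_left, Nat.mod_eq_of_lt (Nat.lt_succ_of_le hp), and_true]
  linear_combination hd

structure WindowState.Admissible (n : ℕ) (x : WindowState) : Prop where
  par_le : x.par ≤ 1
  a_le : x.a ≤ 1
  b_le : x.b ≤ 1
  emod_two : x.d % 2 = (x.a + x.b) % 2
  three_dvd : (3 : ℤ) ∣ x.d - n
  eminPar_le : eminPar n x.par ≤ x.d
  le_emaxPar : x.d ≤ emaxPar n x.par

namespace WindowState.Admissible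

variable {n : ℕ} {x : WindowState}

lemma emin_le (h : x.Admissible n) : emin n ≤ x.d :=
  (emin_le_eminPar n h.par_le).trans h.eminPar_le

lemma le_emax (h : x.Admissible n) : x.d ≤ emax n :=
  h.le_emaxPar.trans (emaxPar_le_emax n h.par_le)

lemma lift {p q k : ℕ} (hp : p ≤ 1) (hq : q ≤ 1) (h : x.Admissible (k + p * q)) :
    (x.lift p q).Admissible (2 * k + q) := by
  have hlo := h.emin_le
  have hhi := h.le_emax
  have := h.a_le
  have := h.b_le
  have := h.emod_two
  have := h.three_dvd
  refine ⟨hp, ?_, ?_, ?_, ?_, ?_, ?_⟩ <;>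
    simp only [WindowState.lift, eminPar_two_mul_add k hp hq, emaxPar_two_mul_add k hp hq] <;>
    interval_cases p <;> interval_cases q <;> push_cast at * <;> omega

lemma exists_lift {q k : ℕ} (hq : q ≤ 1) (h : x.Admissible (2 * k + q)) :
    ∃ x' : WindowState, x'.Admissible (k + x.par * q) ∧ x'.lift x.par q = x := by
  obtain ⟨hp, ha, hb, h2, h3, hlo, hhi⟩ := h
  rw [eminPar_two_mul_add k hp hq] at hlo
  rw [emaxPar_two_mul_add k hp hq] at hhi
  have h3' : (3 : ℤ) ∣ q * (1 - 2 * x.par) - x.d - ↑(k + x.par * q) := by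
    interval_cases x.par <;> interval_cases q <;> push_cast at * <;> omega
  obtain ⟨p', hp', hlo', hhi'⟩ := exists_eminPar_le_le_emaxPar (by linarith) (by linarith) h3'
  refine ⟨⟨q * (1 - 2 * x.par) - x.d, p', if x.par = 1 then 1 - x.a else x.a,
    if (x.par + q) % 2 = 1 then 1 - x.b else x.b⟩, ⟨hp', ?_, ?_, ?_, h3', hlo', hhi'⟩, ?_⟩
  all_goals
    obtain ⟨d, p, a, b⟩ := x
    simp only [WindowState.lift, WindowState.mk.injEq] at *
    interval_cases p <;> interval_cases q <;> simp <;> omega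

end WindowState.Admissible

lemma admissible_windowState (i n : ℕ) : (windowState i n).Admissible n := by
  induction h : i + n using Nat.strong_induction_on generalizing i n with
  | _ m ih =>
    obtain ⟨j, p, hp, rfl⟩ : ∃ j p, p ≤ 1 ∧ i = 2 * j + p := ⟨i / 2, i % 2, by omega, by omega⟩
    obtain ⟨k, q, hq, rfl⟩ : ∃ k q, q ≤ 1 ∧ n = 2 * k + q := ⟨n / 2, n % 2, by omega, by omega⟩
    rcases Nat.eq_zero_or_pos (j + k + p + q) with h0 | hpos
    · obtain ⟨rfl, rfl, rfl, rfl⟩ : j = 0 ∧ k = 0 ∧ p = 0 ∧ q = 0 := by omega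
      exact ⟨by decide, by decide, by decide, by decide, by decide,
        by simp [windowState, eminPar, emin_zero], by simp [windowState, emaxPar, emax_zero]⟩
    · rw [windowState_two_mul_add j k hp hq]
      refine .lift hp hq (ih (j + (k + p * q)) ?_ j _ rfl)
      interval_cases p <;> interval_cases q <;> omega

lemma exists_windowState_eq {n : ℕ} {x : WindowState} (hx : x.Admissible n) :
    ∃ i, windowState i n = x := by
  induction n using Nat.strong_induction_on generalizing x with
  | _ n ih =>
    obtain ⟨k, q, hq, rfl⟩ : ∃ k q, q ≤ 1 ∧ n = 2 * k + q := ⟨n / 2, n % 2, by omega, by omega⟩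
    have hp := hx.par_le
    by_cases hsmall : k + x.par * q < 2 * k + q
    · obtain ⟨x', hx', hlift⟩ := hx.exists_lift hq
      obtain ⟨i, rfl⟩ := ih _ hsmall hx'
      exact ⟨2 * i + x.par, (windowState_two_mul_add i k hp hq).trans hlift⟩
    -- halving shortens neither windows of length 0 nor those of length 1 at odd positions
    obtain ⟨d, p, a, b⟩ := x
    obtain ⟨-, ha, hb, h2, h3, hlo, hhi⟩ := hx
    dsimp only at *
    obtain ⟨rfl, hq0 | ⟨rfl, rfl⟩⟩ : k = 0 ∧ (q = 0 ∨ q = 1 ∧ p = 1) := by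
      interval_cases p <;> interval_cases q <;> omega
    · subst hq0
      simp only [eminPar, emaxPar, emin_zero, emax_zero, mul_zero, add_zero, Nat.zero_mod,
        if_true] at hlo hhi
      obtain rfl : d = 0 := le_antisymm hhi hlo
      obtain rfl : a = b := by omega
      have : ∀ p < 2, ∀ a < 2, ∃ i < 6, windowState i 0 = ⟨0, p, a, a⟩ := by decide
      obtain ⟨i, -, hi⟩ := this p (by omega) a (by omega)
      exact ⟨i, hi⟩
    · simp only [eminPar, emaxPar, emin_one, emax_one, mul_zero, zero_add, Nat.mod_succ,
        one_ne_zero, if_false, Nat.reduceDiv] at hlo hhi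
      obtain rfl : d = if (a + b) % 2 = 0 then -2 else 1 := by push_cast at h3; split_ifs <;> omega
      have : ∀ a < 2, ∀ b < 2,
          ∃ i < 12, windowState i 1 = ⟨if (a + b) % 2 = 0 then -2 else 1, 1, a, b⟩ := by decide
      obtain ⟨i, -, hi⟩ := this a (by omega) b (by omega)
      exact ⟨i, hi⟩

lemma exists_windowState_d_eq {n : ℕ} {d : ℤ} (hlo : emin n ≤ d) (hhi : d ≤ emax n)
    (h3 : (3 : ℤ) ∣ d - n) : ∃ i, (windowState i n).d = d := by
  obtain ⟨p, hp, hlo', hhi'⟩ := exists_eminPar_le_le_emaxPar hlo hhi h3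
  obtain ⟨i, hi⟩ := exists_windowState_eq (x := ⟨d, p, (d % 2).toNat, 0⟩)
    ⟨hp, by dsimp only; omega, zero_le_one, by dsimp only; omega, h3, hlo', hhi'⟩
  exact ⟨i, by rw [hi]⟩

lemma three_mul_count_one_add_count_two (i n : ℕ) :
    3 * ((factorAt yw i n).count 1 + (factorAt yw i n).count 2 : ℤ) =
      2 * n + (windowState i n).d := by
  have := congrArg Prod.fst (letterCoords_factorAt i n)
  simp only [letterCoords, stateCoords, Multiset.coe_count] at this
  linarith

lemma three_mul_M12 (n : ℕ) : 3 * (M12 n : ℤ) = 2 * n + emax n := by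
  obtain ⟨i, hi⟩ := exists_windowState_d_eq (emin_le_emax n) le_rfl (three_dvd_emax_sub n)
  have hgreatest : IsGreatest {k | ∃ i, (factorAt yw i n).count 1 + (factorAt yw i n).count 2 = k}
      ((factorAt yw i n).count 1 + (factorAt yw i n).count 2) := by
    refine ⟨⟨i, rfl⟩, ?_⟩
    rintro _ ⟨j, rfl⟩
    have := three_mul_count_one_add_count_two i n
    have := three_mul_count_one_add_count_two j n
    have := (admissible_windowState j n).le_emax
    omega
  rw [M12, hgreatest.csSup_eq]
  push_cast
  linarith [three_mul_count_one_add_count_two i n]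

lemma three_mul_m12 (n : ℕ) : 3 * (m12 n : ℤ) = 2 * n + emin n := by
  obtain ⟨i, hi⟩ := exists_windowState_d_eq le_rfl (emin_le_emax n) (three_dvd_emin_sub n)
  have hleast : IsLeast {k | ∃ i, (factorAt yw i n).count 1 + (factorAt yw i n).count 2 = k}
      ((factorAt yw i n).count 1 + (factorAt yw i n).count 2) := by
    refine ⟨⟨i, rfl⟩, ?_⟩
    rintro _ ⟨j, rfl⟩
    have := three_mul_count_one_add_count_two i n
    have := three_mul_count_one_add_count_two j n
    have := (admissible_windowState j n).emin_le
    omega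
  rw [m12, hleast.csInf_eq]
  push_cast
  linarith [three_mul_count_one_add_count_two i n]

lemma three_mul_D12 (n : ℕ) : 3 * (D12 n : ℤ) = emax n - emin n := by
  have := three_mul_M12 n
  have := three_mul_m12 n
  have := emin_le_emax n
  rw [D12]
  omega

/-- The values of `signature q p a b` over `p, a, b ∈ {0, 1}` with `a + b ≡ r (mod 2)`. -/
def signatureSet (q : ℕ) (r : ℤ) : Finset (ℤ × ℤ) :=
  if q = 1 then (if r = 0 then {(0, 1), (0, -1)} else {(1, 1), (-1, -1)})
  else (if r = 0 then {(0, 0)} else {(1, 0), (-1, 0), (1, 2), (-1, -2)})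

lemma signature_mem_signatureSet {q p a b : ℕ} (hq : q ≤ 1) (hp : p ≤ 1) (ha : a ≤ 1)
    (hb : b ≤ 1) : signature q p a b ∈ signatureSet q ((a + b : ℤ) % 2) := by
  interval_cases q <;> interval_cases p <;> interval_cases a <;> interval_cases b <;> decide

/-- For odd lengths every signature is reached from either parity of the starting position. -/
lemma exists_signature_eq {q p₀ : ℕ} {r : ℤ} {s : ℤ × ℤ} (hq : q ≤ 1) (hp₀ : p₀ ≤ 1)
    (hr : r = 0 ∨ r = 1) (hs : s ∈ signatureSet q r) :
    ∃ p < 2, ∃ a < (2 : ℕ), ∃ b < (2 : ℕ),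
      (q = 1 → p = p₀) ∧ (a + b : ℤ) % 2 = r ∧ signature q p a b = s := by
  revert s
  interval_cases q <;> interval_cases p₀ <;> rcases hr with rfl | rfl <;> decide

lemma card_signatureSet_one (r : ℤ) : (signatureSet 1 r).card = 2 := by
  rw [signatureSet, if_pos rfl]
  split_ifs <;> rfl

lemma card_signatureSet_zero (r : ℤ) : (signatureSet 0 r).card = if r = 0 then 1 else 4 := by
  rw [signatureSet, if_neg zero_ne_one]
  split_ifs <;> rfl

noncomputable def classFinset (n : ℕ) : Finset (ℤ × ℤ × ℤ) :=
  (Finset.range (D12 n + 1)).biUnion fun ℓ =>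
    (signatureSet (n % 2) ((emin n + 3 * ℓ) % 2)).image (Prod.mk (emin n + 3 * ℓ))

lemma mem_classFinset {n : ℕ} {c : ℤ × ℤ × ℤ} :
    c ∈ classFinset n ↔
      emin n ≤ c.1 ∧ c.1 ≤ emax n ∧ (3 : ℤ) ∣ c.1 - n ∧
        c.2 ∈ signatureSet (n % 2) (c.1 % 2) := by
  have hD := three_mul_D12 n
  have h3 := three_dvd_emin_sub n
  simp only [classFinset, Finset.mem_biUnion, Finset.mem_range, Finset.mem_image]
  constructor
  · rintro ⟨ℓ, hℓ, s, hs, rfl⟩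
    refine ⟨by omega, by omega, by omega, hs⟩
  · rintro ⟨hlo, hhi, hdvd, hs⟩
    have hc : emin n + 3 * (((c.1 - emin n) / 3).toNat : ℤ) = c.1 := by omega
    exact ⟨_, by omega, c.2, hc ▸ hs, by rw [hc]⟩

lemma range_stateCoords (n : ℕ) :
    Set.range (fun i => stateCoords n (windowState i n)) = classFinset n := by
  ext ⟨d, s⟩
  simp only [Set.mem_range, Finset.mem_coe, mem_classFinset]
  constructor
  · rintro ⟨i, hi⟩
    have hx := admissible_windowState i n
    simp only [stateCoords, Prod.mk.injEq] at hi
    obtain ⟨rfl, rfl⟩ := hi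
    refine ⟨hx.emin_le, hx.le_emax, hx.three_dvd, ?_⟩
    rw [hx.emod_two]
    exact signature_mem_signatureSet (by omega) hx.par_le hx.a_le hx.b_le
  · rintro ⟨hlo, hhi, h3, hs⟩
    obtain ⟨p₀, hp₀, hlo₀, hhi₀⟩ := exists_eminPar_le_le_emaxPar hlo hhi h3
    obtain ⟨p, hp, a, ha, b, hb, hpp₀, hab, rfl⟩ :=
      exists_signature_eq (by omega) hp₀ (by omega) hs
    have hbounds : eminPar n p = eminPar n p₀ ∧ emaxPar n p = emaxPar n p₀ := by
      by_cases hn : n % 2 = 1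
      · rw [hpp₀ hn]
        exact ⟨rfl, rfl⟩
      · simp [eminPar, emaxPar, show n % 2 = 0 by omega]
    obtain ⟨i, hi⟩ := exists_windowState_eq (x := ⟨d, p, a, b⟩)
      ⟨Nat.le_of_lt_succ hp, Nat.le_of_lt_succ ha, Nat.le_of_lt_succ hb, hab.symm, h3,
        hbounds.1 ▸ hlo₀, hbounds.2 ▸ hhi₀⟩
    exact ⟨i, by rw [hi]; rfl⟩

lemma card_classFinset (n : ℕ) :
    (classFinset n).card =
      ∑ ℓ ∈ Finset.range (D12 n + 1), (signatureSet (n % 2) ((emin n + 3 * ℓ) % 2)).card := by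
  rw [classFinset, Finset.card_biUnion]
  · exact Finset.sum_congr rfl fun ℓ _ =>
      Finset.card_image_of_injective _ (Prod.mk_right_injective _)
  · intro ℓ₁ _ ℓ₂ _ hne
    simp only [Function.onFun, Finset.disjoint_left, Finset.mem_image]
    rintro _ ⟨s₁, _, rfl⟩ ⟨s₂, _, h⟩
    exact hne (by simp only [Prod.mk.injEq] at h; omega)

lemma abComplexity_yw_eq_sum (n : ℕ) :
    abComplexity yw n =
      ∑ ℓ ∈ Finset.range (D12 n + 1), (signatureSet (n % 2) ((emin n + 3 * ℓ) % 2)).card := by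
  rw [abComplexity_yw_eq, range_stateCoords, Set.ncard_coe_finset, card_classFinset]

lemma two_mul_sum_range_ite (c K : ℕ) :
    2 * (∑ ℓ ∈ Finset.range K, if (c + ℓ) % 2 = 0 then 1 else 4 : ℤ) =
      5 * K + if K % 2 = 0 then 0 else if c % 2 = 0 then -3 else 3 := by
  induction K with
  | zero => simp
  | succ K ih =>
    rw [Finset.sum_range_succ, mul_add, ih]
    push_cast
    split_ifs <;> omega

lemma abComplexity_yw_of_odd {n : ℕ} (hn : n % 2 = 1) : abComplexity yw n = 2 * (D12 n + 1) := by
  simp [abComplexity_yw_eq_sum, hn, card_signatureSet_one, mul_comm]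

lemma two_mul_abComplexity_yw_of_even {n : ℕ} (hn : n % 2 = 0) :
    2 * (abComplexity yw n : ℤ) =
      5 * (D12 n + 1 : ℕ) +
        if (D12 n + 1) % 2 = 0 then 0 else if m12 n % 2 = 0 then -3 else 3 := by
  have hm := three_mul_m12 n
  rw [← two_mul_sum_range_ite (m12 n), abComplexity_yw_eq_sum, hn]
  push_cast
  congr 1
  refine Finset.sum_congr rfl fun ℓ _ => ?_
  rw [card_signatureSet_zero]
  have : (emin n + 3 * ℓ) % 2 = 0 ↔ (m12 n + ℓ) % 2 = 0 := by omega
  by_cases h : (m12 n + ℓ) % 2 = 0 <;> simp [h, this]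

theorem stmt16 (n : ℕ) :
    (Odd n → abComplexity yw n = 2 * D12 n + 2) ∧
    (Even n → Odd (D12 n) → 2 * abComplexity yw n = 5 * D12 n + 5) ∧
    (Even n → Even (D12 n) → Odd (m12 n) → 2 * abComplexity yw n = 5 * D12 n + 8) ∧
    (Even n → Even (D12 n) → Even (m12 n) → 2 * abComplexity yw n = 5 * D12 n + 2) := by
  simp only [Nat.odd_iff, Nat.even_iff]
  refine ⟨fun hn => by rw [abComplexity_yw_of_odd hn]; ring, ?_, ?_, ?_⟩ <;> intro hn <;>
    have := two_mul_abComplexity_yw_of_even hn <;> split_ifs at this <;> omega
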